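/- arXiv:1607.05222 — 6 statements merged into one kernel-verified Lean document; each statement's English description precedes it below -/
import Mathlib

section
/- For every doubly stochastic k×k real matrix ω, the squared Frobenius norm is bounded by the maximal trace overlap with a permutation matrix: ‖ω‖_F² ≤ max over k×k permutation matrices π of Tr(π^⊤ ω). -/
open Matrix Finset

/-- The `0/1` permutation matrix of a permutation `π` of `Fin k`. -/
def permMat {k : ℕ} (π : Equiv.Perm (Fin k)) : Matrix (Fin k) (Fin k) ℝ :=
  Matrix.of fun i j => if π i = j then 1 else 0

lemma trace_permMat {k : ℕ} (π : Equiv.Perm (Fin k)) (ω : Matrix (Fin k) (Fin k) ℝ) :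
    Matrix.trace ((permMat π)ᵀ * ω) = ∑ i, ω i (π i) := by
  simp only [Matrix.trace, Matrix.diag, Matrix.mul_apply, Matrix.transpose_apply, permMat,
    Matrix.of_apply]
  rw [Finset.sum_comm]
  simp [ite_mul]

/-- For every doubly stochastic `k × k` matrix `ω`, the squared Frobenius norm is bounded
by the maximal trace overlap with a permutation matrix:
`‖ω‖_F² ≤ max_π Tr(πᵀ ω)`. -/
theorem frobenius_le_trace_overlap {k : ℕ} (ω : Matrix (Fin k) (Fin k) ℝ)
    (hnonneg : ∀ s t, 0 ≤ ω s t)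
    (hrow : ∀ s, ∑ t, ω s t = 1) (hcol : ∀ t, ∑ s, ω s t = 1) :
    ∑ s, ∑ t, ω s t ^ 2 ≤
      (Finset.univ : Finset (Equiv.Perm (Fin k))).sup' ⟨1, Finset.mem_univ 1⟩
        (fun π => Matrix.trace ((permMat π)ᵀ * ω)) := by
  have hω : ω ∈ doublyStochastic ℝ (Fin k) :=
    mem_doublyStochastic_iff_sum.2 ⟨fun i j => hnonneg i j, hrow, hcol⟩
  obtain ⟨w, hw0, hw1, hwsum⟩ := exists_eq_sum_perm_of_mem_doublyStochastic hω
  set B := (Finset.univ : Finset (Equiv.Perm (Fin k))).sup' ⟨1, Finset.mem_univ 1⟩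
        (fun π => Matrix.trace ((permMat π)ᵀ * ω)) with hB
  have key : ∑ s, ∑ t, ω s t ^ 2 = ∑ σ : Equiv.Perm (Fin k), w σ * ∑ i, ω i (σ i) := by
    calc ∑ s, ∑ t, ω s t ^ 2
        = ∑ s, ∑ t, (∑ σ : Equiv.Perm (Fin k), w σ • σ.permMatrix ℝ) s t * ω s t := by
          rw [hwsum]; simp [sq]
      _ = ∑ s, ∑ t, ∑ σ : Equiv.Perm (Fin k), w σ * (if σ s = t then ω s t else 0) := by
          refine Finset.sum_congr rfl fun s _ => Finset.sum_congr rfl fun t _ => ?_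
          rw [Matrix.sum_apply, Finset.sum_mul]
          refine Finset.sum_congr rfl fun σ _ => ?_
          simp [Equiv.Perm.permMatrix, PEquiv.toMatrix_apply, Equiv.toPEquiv_apply, ite_mul,
            mul_ite]
      _ = ∑ σ : Equiv.Perm (Fin k), ∑ s, ∑ t, w σ * (if σ s = t then ω s t else 0) :=
          (Finset.sum_congr rfl fun s _ => Finset.sum_comm).trans Finset.sum_comm
      _ = ∑ σ : Equiv.Perm (Fin k), w σ * ∑ i, ω i (σ i) := by
          refine Finset.sum_congr rfl fun σ _ => ?_
          rw [Finset.mul_sum]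
          exact Finset.sum_congr rfl fun i _ => by simp
  rw [key]
  calc ∑ σ : Equiv.Perm (Fin k), w σ * ∑ i, ω i (σ i)
      ≤ ∑ σ : Equiv.Perm (Fin k), w σ * B := by
        refine Finset.sum_le_sum fun σ _ => mul_le_mul_of_nonneg_left ?_ (hw0 σ)
        rw [← trace_permMat]
        exact hB ▸ Finset.le_sup' (fun π => Matrix.trace ((permMat π)ᵀ * ω)) (Finset.mem_univ σ)
    _ = B := by rw [← Finset.sum_mul, hw1, one_mul]
end

section
/- Let a > 0, let ε_1, ε_2, … be i.i.d. random variables uniform on {−1, +1}, and for each nonnegative integer z set S_z = Σ_{i=1}^{z} ε_i and g(z) = E[exp(a·S_z²)]. Then for every nonnegative integer z, g(z+2) + g(z) ≥ 2·g(z+1); consequently, the piecewise linear interpolation of z ↦ g(z) on [1, ∞) is a convex function. -/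
/-!
Conditioning on the first two signs, `g(z+2) + g(z) - 2 g(z+1)` is the average over `S_z` of
`Δ⁴f(S_z) / 4`, where `f t = exp (a t²)` and `Δ⁴f(s) = f(s+2) - 4f(s+1) + 6f(s) - 4f(s-1) + f(s-2)`.
Pairing `s ± k` gives `f(s+k) + f(s-k) = 2 f(s) e^{ak²} cosh (2aks)`, so with `x = e^a ≥ 1` and
`C = cosh (2as) ≥ 1` the fourth difference is `2 f(s) (x⁴ (2C² - 1) - 4xC + 3) ≥ 0`.

A sequence with nonnegative second differences has nondecreasing slopes, so at every `x ≥ 0` the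
chord line through `(n, g n)` and `(n+1, g (n+1))` is largest for `n = ⌊x⌋`: the interpolant is the
pointwise supremum of these affine functions, hence convex.
-/

open Finset
open scoped BigOperators

/-- `g(z) = E[exp(a S_z²)]` where `S_z` is a sum of `z` independent Rademacher signs:
the average of `exp(a (Σ_i ε_i)²)` over all `2^z` sign vectors `ε ∈ {±1}^z`. -/
noncomputable def radMGF (a : ℝ) (z : ℕ) : ℝ :=
  ((2 : ℝ) ^ z)⁻¹ *
    ∑ ε : Fin z → Bool, Real.exp (a * (∑ i, (if ε i then (1 : ℝ) else -1)) ^ 2)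

def signSum {n : ℕ} (ε : Fin n → Bool) : ℝ :=
  ∑ i, if ε i then 1 else -1

lemma signSum_cons {n : ℕ} (b : Bool) (ε : Fin n → Bool) :
    signSum (Fin.cons b ε : Fin (n + 1) → Bool) = (if b then 1 else -1) + signSum ε := by
  simp only [signSum, Fin.sum_univ_succ, Fin.cons_zero, Fin.cons_succ]

lemma expect_signSum_succ (f : ℝ → ℝ) (n : ℕ) :
    𝔼 ε : Fin (n + 1) → Bool, f (signSum ε) =
      𝔼 ε : Fin n → Bool, (f (signSum ε + 1) + f (signSum ε - 1)) / 2 := by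
  rw [Fintype.expect_equiv (Fin.consEquiv fun _ => Bool).symm _
    (fun p => f (signSum (Fin.cons p.1 p.2 : Fin (n + 1) → Bool))) fun ε => by simp]
  rw [← univ_product_univ, expect_product, Fintype.expect_eq_sum_div_card (ι := Bool),
    Fintype.sum_bool, ← expect_add_distrib, Fintype.card_bool, Nat.cast_two, expect_div]
  simp only [signSum_cons, if_true, Bool.false_eq_true, if_false, add_comm (1 : ℝ),
    neg_add_eq_sub]

lemma two_mul_expect_signSum_succ_le {f : ℝ → ℝ}
    (hf : ∀ t, 4 * (f (t + 1) + f (t - 1)) ≤ f (t + 2) + 6 * f t + f (t - 2)) (n : ℕ) :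
    2 * 𝔼 ε : Fin (n + 1) → Bool, f (signSum ε) ≤
      (𝔼 ε : Fin (n + 2) → Bool, f (signSum ε)) + 𝔼 ε : Fin n → Bool, f (signSum ε) := by
  rw [expect_signSum_succ _ (n + 1), expect_signSum_succ,
    expect_signSum_succ (fun t => (f (t + 1) + f (t - 1)) / 2), mul_expect,
    ← expect_add_distrib]
  refine expect_le_expect fun ε _ => ?_
  set s := signSum ε
  rw [show s + 1 + 1 = s + 2 by ring, show s + 1 - 1 = s by ring, show s - 1 + 1 = s by ring,
    show s - 1 - 1 = s - 2 by ring]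
  linarith [hf s]

lemma radMGF_eq_expect (a : ℝ) (z : ℕ) :
    radMGF a z = 𝔼 ε : Fin z → Bool, Real.exp (a * signSum ε ^ 2) := by
  rw [Fintype.expect_eq_sum_div_card]
  simp [radMGF, signSum, div_eq_inv_mul]

lemma exp_mul_sq_add_add_exp_mul_sq_sub (a s k : ℝ) :
    Real.exp (a * (s + k) ^ 2) + Real.exp (a * (s - k) ^ 2) =
      2 * Real.exp (a * s ^ 2) * Real.exp (a * k ^ 2) * Real.cosh (2 * a * k * s) := by
  have hsplit (u : ℝ) : Real.exp (a * (s + u) ^ 2) =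
      Real.exp (a * s ^ 2) * Real.exp (a * u ^ 2) * Real.exp (2 * a * u * s) := by
    rw [← Real.exp_add, ← Real.exp_add]; ring_nf
  rw [sub_eq_add_neg, hsplit, hsplit, Real.cosh_eq]
  ring_nf

-- `x⁴ (2C² - 1) - 4xC + 3 = 2x⁴(C-1)² + 4x(x³-1)(C-1) + (x-1)²(x²+2x+3)`
lemma four_mul_le_pow_four_mul_two_mul_sq_sub_one_add_three {x C : ℝ} (hx : 1 ≤ x)
    (hC : 1 ≤ C) :
    4 * x * C ≤ x ^ 4 * (2 * C ^ 2 - 1) + 3 := by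
  have hx3 : 1 ≤ x ^ 3 := one_le_pow₀ hx
  nlinarith [mul_nonneg (by positivity : (0 : ℝ) ≤ 2 * x ^ 4) (sq_nonneg (C - 1)),
    mul_nonneg (mul_nonneg (by positivity : (0 : ℝ) ≤ 4 * x) (sub_nonneg.2 hx3))
      (sub_nonneg.2 hC),
    mul_nonneg (sq_nonneg (x - 1)) (by positivity : (0 : ℝ) ≤ x ^ 2 + 2 * x + 3)]

lemma exp_mul_sq_fourth_diff_nonneg {a : ℝ} (ha : 0 ≤ a) (t : ℝ) :
    4 * (Real.exp (a * (t + 1) ^ 2) + Real.exp (a * (t - 1) ^ 2)) ≤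
      Real.exp (a * (t + 2) ^ 2) + 6 * Real.exp (a * t ^ 2) + Real.exp (a * (t - 2) ^ 2) := by
  have h1 := exp_mul_sq_add_add_exp_mul_sq_sub a t 1
  have h2 := exp_mul_sq_add_add_exp_mul_sq_sub a t 2
  simp only [one_pow, mul_one] at h1
  have hx4 : Real.exp (a * 2 ^ 2) = Real.exp a ^ 4 := by rw [← Real.exp_nat_mul]; ring_nf
  have hC2 : Real.cosh (2 * a * 2 * t) = 2 * Real.cosh (2 * a * t) ^ 2 - 1 := by
    rw [show 2 * a * 2 * t = 2 * (2 * a * t) by ring, Real.cosh_two_mul, Real.cosh_sq]; ring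
  have key := four_mul_le_pow_four_mul_two_mul_sq_sub_one_add_three
    (Real.one_le_exp_iff.mpr ha) (Real.one_le_cosh (2 * a * t))
  rw [add_right_comm, h2, hx4, hC2, h1]
  nlinarith [mul_le_mul_of_nonneg_left key (Real.exp_pos (a * t ^ 2)).le]

section ChordInterpolation

variable (g : ℕ → ℝ)

def chordLine (n : ℕ) (x : ℝ) : ℝ :=
  g n + (x - n) * (g (n + 1) - g n)

lemma chordLine_succ_sub (n : ℕ) (x : ℝ) :
    chordLine g (n + 1) x - chordLine g n x =
      (x - (n + 1)) * (g (n + 2) - 2 * g (n + 1) + g n) := by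
  simp only [chordLine, Nat.cast_succ]
  ring

variable {g} {x : ℝ}

lemma chordLine_le_chordLine_of_le (hg : ∀ n, 2 * g (n + 1) ≤ g (n + 2) + g n) {n m : ℕ}
    (hnm : n ≤ m) (hm : (m : ℝ) ≤ x) :
    chordLine g n x ≤ chordLine g m x := by
  induction m, hnm using Nat.le_induction with
  | base => exact le_rfl
  | succ m _ ih =>
    push_cast at hm
    nlinarith [chordLine_succ_sub g m x, hg m, ih (by linarith)]

lemma chordLine_le_chordLine_of_ge (hg : ∀ n, 2 * g (n + 1) ≤ g (n + 2) + g n) {n m : ℕ}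
    (hnm : n ≤ m) (hn : x ≤ n + 1) :
    chordLine g m x ≤ chordLine g n x := by
  induction m, hnm using Nat.le_induction with
  | base => exact le_rfl
  | succ m hnm ih =>
    have : (n : ℝ) ≤ m := by exact_mod_cast hnm
    nlinarith [chordLine_succ_sub g m x, hg m]

lemma chordLine_le_chordLine_floor (hg : ∀ n, 2 * g (n + 1) ≤ g (n + 2) + g n) (hx : 0 ≤ x)
    (n : ℕ) :
    chordLine g n x ≤ chordLine g ⌊x⌋₊ x := by
  rcases le_total n ⌊x⌋₊ with hn | hn
  · exact chordLine_le_chordLine_of_le hg hn (Nat.floor_le hx)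
  · exact chordLine_le_chordLine_of_ge hg hn (Nat.lt_floor_add_one x).le

lemma convexOn_chordLine_floor (hg : ∀ n, 2 * g (n + 1) ≤ g (n + 2) + g n) :
    ConvexOn ℝ (Set.Ici 0) fun x => chordLine g ⌊x⌋₊ x := by
  refine ⟨convex_Ici 0, fun x hx y hy s t hs ht hst => ?_⟩
  set n := ⌊s • x + t • y⌋₊
  calc chordLine g n (s • x + t • y) = s * chordLine g n x + t * chordLine g n y := by
        simp only [chordLine, smul_eq_mul]
        linear_combination (g n - n * (g (n + 1) - g n)) * hst.symm
    _ ≤ s * chordLine g ⌊x⌋₊ x + t * chordLine g ⌊y⌋₊ y := by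
        gcongr
        exacts [chordLine_le_chordLine_floor hg hx n, chordLine_le_chordLine_floor hg hy n]

end ChordInterpolation

lemma two_mul_radMGF_succ_le {a : ℝ} (ha : 0 ≤ a) (z : ℕ) :
    2 * radMGF a (z + 1) ≤ radMGF a (z + 2) + radMGF a z := by
  simp only [radMGF_eq_expect]
  exact two_mul_expect_signSum_succ_le (f := fun t => Real.exp (a * t ^ 2))
    (exp_mul_sq_fourth_diff_nonneg ha) z

/-- **Discrete convexity of the Rademacher exponential moment.**  For `a > 0` and
`g(z) = E[exp(a S_z²)]`, one has `g(z+2) + g(z) ≥ 2 g(z+1)` for every `z ≥ 0`;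
consequently the piecewise linear interpolation of `g` is convex on `[1, ∞)`. -/
theorem radMGF_convex (a : ℝ) (ha : 0 < a) :
    (∀ z : ℕ, 2 * radMGF a (z + 1) ≤ radMGF a (z + 2) + radMGF a z) ∧
    ConvexOn ℝ (Set.Ici (1 : ℝ))
      (fun x : ℝ =>
        radMGF a ⌊x⌋₊ + (x - ⌊x⌋₊) * (radMGF a (⌊x⌋₊ + 1) - radMGF a ⌊x⌋₊)) :=
  ⟨two_mul_radMGF_succ_le ha.le,
    (convexOn_chordLine_floor (two_mul_radMGF_succ_le ha.le)).subset
      (Set.Ici_subset_Ici.2 zero_le_one) (convex_Ici 1)⟩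
end

section
/- For every a > 0 and every u ∈ ℝ, one has e^a · cosh(2au) ≤ (1/4)·e^{4a}·cosh(4au) + 3/4. -/
/-- For every `a > 0` and `u ∈ ℝ`, `e^a cosh(2au) ≤ (1/4) e^{4a} cosh(4au) + 3/4`. -/
theorem exp_cosh_ineq (a u : ℝ) (ha : 0 < a) :
    Real.exp a * Real.cosh (2 * a * u) ≤
      1 / 4 * Real.exp (4 * a) * Real.cosh (4 * a * u) + 3 / 4 := by
  have hc : Real.cosh (4 * a * u) = 2 * Real.cosh (2 * a * u) ^ 2 - 1 := by
    rw [show (4 : ℝ) * a * u = 2 * (2 * a * u) by ring, Real.cosh_two_mul, Real.sinh_sq]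
    ring
  have hE : Real.exp (4 * a) = Real.exp a ^ 4 := by
    rw [show (4 : ℝ) * a = a + (a + (a + a)) by ring, Real.exp_add, Real.exp_add,
      Real.exp_add]; ring
  have h1 : 1 ≤ Real.exp a := Real.one_le_exp ha.le
  have h2 : 1 ≤ Real.cosh (2 * a * u) := Real.one_le_cosh _
  set E := Real.exp a
  set c := Real.cosh (2 * a * u)
  rw [hc, hE]
  nlinarith [sq_nonneg (E * c - 1), sq_nonneg (E - 1), sq_nonneg (E * c - E),
    mul_nonneg (sub_nonneg.2 h1) (sub_nonneg.2 h2), sq_nonneg (E ^ 2 - 1),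
    sq_nonneg (E ^ 2 * c - 1), mul_nonneg (mul_nonneg (sub_nonneg.2 h1) (sub_nonneg.2 h1)) (sub_nonneg.2 h2)]
end

section
/- Let Z be a standard Gaussian random variable, Z ~ N(0,1). Then for all real numbers a and b, E[e^{aZ}·1{Z ≤ b}] ≤ exp(a²/2 − ((a − b)₊)²/2), where x₊ = max(x, 0). -/
open MeasureTheory ProbabilityTheory
open scoped ENNReal NNReal

lemma gauss_aux_smul (a : ℝ) (x : ℝ) :
    (Real.toNNReal (gaussianPDFReal 0 1 x)) • Real.exp (a * x)
      = Real.exp (a ^ 2 / 2) * gaussianPDFReal a 1 x := by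
  rw [NNReal.smul_def, Real.coe_toNNReal _ (gaussianPDFReal_nonneg _ _ _), smul_eq_mul]
  simp only [gaussianPDFReal, NNReal.coe_one, mul_one, sub_zero]
  rw [mul_comm (Real.exp (a ^ 2 / 2)), mul_assoc, mul_assoc, ← Real.exp_add, ← Real.exp_add]
  congr 1
  ring

/-- **Truncated Gaussian exponential moment.**  For `Z ~ N(0,1)` and all `a b : ℝ`,
`E[e^{aZ} 1{Z ≤ b}] ≤ exp(a²/2 - ((a-b)₊)²/2)` where `x₊ = max x 0`. -/
theorem gaussian_truncated_mgf (a b : ℝ) :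
    ∫ x in Set.Iic b, Real.exp (a * x) ∂(gaussianReal 0 1) ≤
      Real.exp (a ^ 2 / 2 - max (a - b) 0 ^ 2 / 2) := by
  set a' := min a b with ha'
  set c := max (a - b) 0 with hcdef
  have hc0 : 0 ≤ c := le_max_right _ _
  have hac : a = a' + c := by
    rcases le_total a b with h | h
    · simp [ha', hcdef, min_eq_left h, max_eq_right (sub_nonpos.mpr h)]
    · simp [ha', hcdef, min_eq_right h, max_eq_left (sub_nonneg.mpr h)]
  have hμ : gaussianReal 0 1
      = volume.withDensity (fun x => (Real.toNNReal (gaussianPDFReal 0 1 x) : ℝ≥0∞)) := by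
    rw [gaussianReal_of_var_ne_zero 0 one_ne_zero]; rfl
  rw [hμ, setIntegral_withDensity_eq_setIntegral_smul
    (measurable_gaussianPDFReal 0 1).real_toNNReal _ measurableSet_Iic]
  simp_rw [gauss_aux_smul a]
  rw [integral_const_mul]
  have hkey : ∀ x ∈ Set.Iic b,
      gaussianPDFReal a 1 x ≤ Real.exp (-c ^ 2 / 2) * gaussianPDFReal a' 1 x := by
    intro x hx
    simp only [Set.mem_Iic] at hx
    have hxa' : c * (x - a') ≤ 0 := by
      rcases le_total a b with h | h
      · simp [hcdef, max_eq_right (sub_nonpos.mpr h)]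
      · have : a' = b := min_eq_right h
        nlinarith
    simp only [gaussianPDFReal, NNReal.coe_one, mul_one]
    rw [mul_comm (Real.exp (-c ^ 2 / 2)), mul_assoc, ← Real.exp_add]
    refine mul_le_mul_of_nonneg_left (Real.exp_le_exp.mpr ?_) (by positivity)
    have hexp : (x - a) ^ 2 = (x - a') ^ 2 - 2 * (c * (x - a')) + c ^ 2 := by
      rw [hac]; ring
    linarith
  have hint1 : IntegrableOn (gaussianPDFReal a 1) (Set.Iic b) volume :=
    (integrable_gaussianPDFReal a 1).integrableOn
  have hint2 : IntegrableOn (fun x => Real.exp (-c ^ 2 / 2) * gaussianPDFReal a' 1 x)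
      (Set.Iic b) volume :=
    ((integrable_gaussianPDFReal a' 1).const_mul _).integrableOn
  have h1 : ∫ x in Set.Iic b, gaussianPDFReal a 1 x
      ≤ Real.exp (-c ^ 2 / 2) * ∫ x in Set.Iic b, gaussianPDFReal a' 1 x := by
    rw [← integral_const_mul]
    exact setIntegral_mono_on hint1 hint2 measurableSet_Iic hkey
  have h2 : ∫ x in Set.Iic b, gaussianPDFReal a' 1 x ≤ 1 := by
    rw [← integral_gaussianPDFReal_eq_one a' one_ne_zero]
    exact setIntegral_le_integral (integrable_gaussianPDFReal a' 1)
      (ae_of_all _ (gaussianPDFReal_nonneg a' 1))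
  calc Real.exp (a ^ 2 / 2) * ∫ x in Set.Iic b, gaussianPDFReal a 1 x
      ≤ Real.exp (a ^ 2 / 2) * (Real.exp (-c ^ 2 / 2) * 1) := by
        refine mul_le_mul_of_nonneg_left ?_ (Real.exp_nonneg _)
        refine h1.trans (mul_le_mul_of_nonneg_left h2 (Real.exp_nonneg _))
    _ = Real.exp (a ^ 2 / 2 - c ^ 2 / 2) := by
        rw [mul_one, ← Real.exp_add]; ring_nf
end

section
/- For every u ∈ [0,1], the binary entropy satisfies the quartic bound h(u) ≤ log 2 − 2·(u − 1/2)² − (4/3)·(u − 1/2)⁴, where h(u) = −u·log u − (1−u)·log(1−u) with natural logarithm and the convention 0·log 0 = 0. -/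
/-- The binary entropy function `h(u) = -u log u - (1-u) log(1-u)` (natural logarithm,
with the convention `0 log 0 = 0`, which holds since `Real.log 0 = 0`). -/
noncomputable def binEntropy (u : ℝ) : ℝ :=
  -(u * Real.log u) - (1 - u) * Real.log (1 - u)

/-!
Since `h` is symmetric about `1/2`, it suffices to take `u ≥ 1/2`. There the gap between the
bound and `h` vanishes at `1/2` and is nondecreasing: with `t = 2u - 1`, its derivative is
`log ((1 + t) / (1 - t)) - 2t - 2t³/3`, which is nonnegative because `2t + 2t³/3` consists of
the first two (nonnegative) terms of the power series
`log ((1 + t) / (1 - t)) = 2 ∑ t^(2k+1)/(2k+1)`.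
-/

open Set

lemma binEntropy_eq_real_binEntropy (u : ℝ) : binEntropy u = Real.binEntropy u := by
  rw [binEntropy, Real.binEntropy, Real.log_inv, Real.log_inv]
  ring

lemma two_mul_add_le_log_one_add_sub_log_one_sub {t : ℝ} (ht₀ : 0 ≤ t) (ht₁ : t < 1) :
    2 * t + 2 * t ^ 3 / 3 ≤ Real.log (1 + t) - Real.log (1 - t) := by
  have hsum := Real.hasSum_log_sub_log_of_abs_lt_one (abs_lt.2 ⟨by linarith, ht₁⟩)
  have := sum_le_hasSum (Finset.range 2) (fun k _ => by positivity) hsum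
  norm_num [Finset.sum_range_succ] at this
  linarith

lemma four_mul_add_le_log_sub_log_one_sub {v : ℝ} (hv₀ : 1 / 2 ≤ v) (hv₁ : v < 1) :
    4 * (v - 1 / 2) + 16 / 3 * (v - 1 / 2) ^ 3 ≤ Real.log v - Real.log (1 - v) := by
  have h := two_mul_add_le_log_one_add_sub_log_one_sub (t := 2 * v - 1) (by linarith) (by linarith)
  rw [show 1 + (2 * v - 1) = 2 * v by ring, show 1 - (2 * v - 1) = 2 * (1 - v) by ring,
    Real.log_mul two_ne_zero (by linarith), Real.log_mul two_ne_zero (by linarith)] at h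
  calc 4 * (v - 1 / 2) + 16 / 3 * (v - 1 / 2) ^ 3
      = 2 * (2 * v - 1) + 2 * (2 * v - 1) ^ 3 / 3 := by ring
    _ ≤ Real.log v - Real.log (1 - v) := by linarith

lemma antitoneOn_binEntropy_add_quartic :
    AntitoneOn (fun v => Real.binEntropy v + 2 * (v - 1 / 2) ^ 2 + 4 / 3 * (v - 1 / 2) ^ 4)
      (Icc (1 / 2) 1) := by
  have hderiv : ∀ v ∈ Ioo (1 / 2 : ℝ) 1,
      HasDerivAt (fun v => Real.binEntropy v + 2 * (v - 1 / 2) ^ 2 + 4 / 3 * (v - 1 / 2) ^ 4)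
        (Real.log (1 - v) - Real.log v + (4 * (v - 1 / 2) + 16 / 3 * (v - 1 / 2) ^ 3)) v := by
    intro v hv
    have hshift := (hasDerivAt_id' v).sub_const (1 / 2)
    exact (((Real.hasDerivAt_binEntropy (by linarith [hv.1]) hv.2.ne).add
      ((hshift.pow 2).const_mul 2)).add ((hshift.pow 4).const_mul (4 / 3))).congr_deriv
      (by ring)
  refine antitoneOn_of_deriv_nonpos (convex_Icc _ _) ?_ ?_ ?_
  · exact (by fun_prop : Continuous _).continuousOn
  · rw [interior_Icc]
    exact fun v hv => (hderiv v hv).differentiableAt.differentiableWithinAt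
  · rw [interior_Icc]
    intro v hv
    rw [(hderiv v hv).deriv]
    linarith [four_mul_add_le_log_sub_log_one_sub hv.1.le hv.2]

lemma Real.binEntropy_le_log_two_sub_quartic {u : ℝ} (hu₀ : 0 ≤ u) (hu₁ : u ≤ 1) :
    Real.binEntropy u ≤ Real.log 2 - 2 * (u - 1 / 2) ^ 2 - 4 / 3 * (u - 1 / 2) ^ 4 := by
  wlog hu : 1 / 2 ≤ u generalizing u
  · have := this (u := 1 - u) (by linarith) (by linarith) (by linarith)
    rw [Real.binEntropy_one_sub] at this
    convert this using 2 <;> ring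
  have := antitoneOn_binEntropy_add_quartic ⟨le_rfl, by norm_num⟩ ⟨hu, hu₁⟩ hu
  simp only [sub_self, ne_eq, OfNat.ofNat_ne_zero, not_false_eq_true, zero_pow, mul_zero, add_zero,
    one_div, Real.binEntropy_two_inv] at this
  linarith

/-- **Quartic bound for the binary entropy.**  For every `u ∈ [0,1]`,
`h(u) ≤ log 2 - 2 (u - 1/2)² - (4/3) (u - 1/2)⁴`. -/
theorem binEntropy_quartic_bound (u : ℝ) (hu0 : 0 ≤ u) (hu1 : u ≤ 1) :
    binEntropy u ≤ Real.log 2 - 2 * (u - 1 / 2) ^ 2 - 4 / 3 * (u - 1 / 2) ^ 4 := by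
  rw [binEntropy_eq_real_binEntropy]
  exact Real.binEntropy_le_log_two_sub_quartic hu0 hu1
end

section
/- Let k ≥ 3 be an integer and let t ∈ (0,1) satisfy t ≤ 0.4 and t ≥ max{ 3/k, (e/k)^{1/5}, (1 − 1/k)/(2·(log k − 1)), 2·log k/(5·(k − 2·log k + 1)) }. Define c_t = 5t/(log k − 1) − (2 + 5t)/(k·(log k − 1)). Then c_t > 0, and for every x ∈ [0,1] (with the convention 0·log 0 = 0): (x² − 1/k²)·1{x < t} ≤ 5t·(x − 1/k)·(1 − x) + c_t·( x·log x + (log k)/k ). -/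
/-!
Write `klFun y = y log y - y + 1`, `K = k` and `c = c_t`. For `x < t` the substitution `y = K x`
turns the claim, multiplied by `K²`, into `(5t + 1)(y - 1)² ≤ c K · klFun y` on `[0, t K]`.
Since `klFun y - (y - 1)² / 2` is decreasing, and `(y - 1)² / klFun y` is increasing for `y > 1`
(which amounts to `2 (y - 1) ≤ (y + 1) log y`, the first term of the series of `log`), it
suffices to check the end point `y = t K`; there `(e / K)^{1/5} ≤ t` gives
`log (t K) - 1 ≥ 4/5 (log K - 1)`, which is what makes the end point work.

For `x ≥ t` the left side vanishes. For `x ≤ 1/2`, `log x ≥ log t ≥ (1 - log K) / 5`, and the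
choice of `c` makes `c x (1 - log K) / 5 ≥ -t x`, which `5t (x - 1/K)(1 - x)` absorbs; for
`x > 1/2` one uses `x log x ≥ x - 1` and `c ≤ 5t/3 ≤ 5t (x - 1/K)`.
-/

open Real Set InformationTheory

lemma two_mul_sub_one_le_add_one_mul_log {v : ℝ} (hv : 1 ≤ v) :
    2 * (v - 1) ≤ (v + 1) * log v := by
  have h := le_hasSum (hasSum_log_one_add (sub_nonneg.2 hv)) 0 fun j _ => by positivity
  norm_num at h
  rw [← div_le_iff₀' (by linarith)]
  convert h using 2
  ring

lemma klFun_pos {y : ℝ} (hy0 : 0 ≤ y) (hy1 : y ≠ 1) : 0 < klFun y :=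
  (klFun_nonneg hy0).lt_of_ne' fun h => hy1 ((klFun_eq_zero_iff hy0).1 h)

lemma antitoneOn_klFun_sub_sq : AntitoneOn (fun y => klFun y - (y - 1) ^ 2 / 2) (Ici 0) := by
  refine antitoneOn_of_hasDerivWithinAt_nonpos (convex_Ici 0) (by fun_prop [continuous_klFun])
    (f' := fun y => log y - (y - 1)) (fun y hy => ?_) fun y hy => ?_
  · rw [interior_Ici] at hy
    have := (hasDerivAt_klFun (ne_of_gt hy)).sub
      ((((hasDerivAt_id y).sub_const 1).pow 2).div_const 2)
    exact (this.congr_deriv (by simp)).hasDerivWithinAt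
  · rw [interior_Ici] at hy
    linarith [log_le_sub_one_of_pos hy]

lemma monotoneOn_sq_sub_one_div_klFun :
    MonotoneOn (fun y => (y - 1) ^ 2 / klFun y) (Ioi 1) := by
  have hne : ∀ y ∈ Ioi (1 : ℝ), klFun y ≠ 0 := fun y hy =>
    (klFun_pos (by linarith [mem_Ioi.1 hy]) (ne_of_gt hy)).ne'
  refine monotoneOn_of_hasDerivWithinAt_nonneg (convex_Ioi 1)
    ((by fun_prop : Continuous fun y : ℝ => (y - 1) ^ 2).continuousOn.div
      continuous_klFun.continuousOn hne)
    (f' := fun y => (y - 1) * ((y + 1) * log y - 2 * (y - 1)) / klFun y ^ 2)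
    (fun y hy => ?_) fun y hy => ?_
  · rw [interior_Ioi] at hy
    have := (((hasDerivAt_id' y).sub_const 1).fun_pow 2).fun_div
      (hasDerivAt_klFun (by linarith [mem_Ioi.1 hy])) (hne y hy)
    refine (this.congr_deriv ?_).hasDerivWithinAt
    rw [klFun_apply]
    ring
  · rw [interior_Ioi] at hy
    have := two_mul_sub_one_le_add_one_mul_log (le_of_lt hy)
    exact div_nonneg (mul_nonneg (by linarith [mem_Ioi.1 hy]) (by linarith)) (sq_nonneg _)

lemma mul_sq_sub_one_le_mul_klFun {β C Y y : ℝ} (hβ : 0 ≤ β) (hY : 1 < Y)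
    (hYβC : β * (Y - 1) ^ 2 ≤ C * klFun Y) (hy0 : 0 ≤ y) (hyY : y ≤ Y) :
    β * (y - 1) ^ 2 ≤ C * klFun y := by
  have hklY := klFun_pos (by linarith) hY.ne'
  have hYsq : klFun Y ≤ (Y - 1) ^ 2 / 2 := by
    have := antitoneOn_klFun_sub_sq (mem_Ici.2 zero_le_one) (mem_Ici.2 (by linarith)) hY.le
    simp only [klFun_one] at this
    linarith
  have hβC : 2 * β ≤ C := le_of_mul_le_mul_right (by nlinarith) hklY
  rcases le_or_gt y 1 with hy1 | hy1
  · have := antitoneOn_klFun_sub_sq (mem_Ici.2 hy0) (mem_Ici.2 zero_le_one) hy1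
    simp only [klFun_one] at this
    nlinarith [klFun_nonneg hy0]
  · have hkly := klFun_pos hy0 hy1.ne'
    have hratio := monotoneOn_sq_sub_one_div_klFun hy1 (hy1.trans_le hyY) hyY
    rw [div_le_div_iff₀ hkly hklY] at hratio
    refine le_of_mul_le_mul_right ?_ hklY
    nlinarith

lemma klFun_mul {K : ℝ} (hK : K ≠ 0) (x : ℝ) :
    klFun (K * x) = K * x * log K + K * (x * log x) + 1 - K * x := by
  rcases eq_or_ne x 0 with rfl | hx
  · simp [klFun_zero]
  · rw [klFun_apply, log_mul hK hx]; ring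

/-- The right-hand side of the bound, with `K = k` and `c = c_t`. -/
noncomputable def entropyQuadratic (K t c x : ℝ) : ℝ :=
  5 * t * (x - 1 / K) * (1 - x) + c * (x * log x + log K / K)

lemma sq_sub_inv_sq_le_entropyQuadratic {K t c x : ℝ} (hK : 0 < K) (ht0 : 0 < t)
    (ht04 : t ≤ 0.4) (htK : 3 / K ≤ t) (hlogt : 1 - log K ≤ 5 * log t)
    (hc : c * (log K - 1) = 5 * t - (2 + 5 * t) / K) (hc0 : 0 ≤ c) (hx0 : 0 ≤ x) (hxt : x ≤ t) :
    x ^ 2 - 1 / K ^ 2 ≤ entropyQuadratic K t c x := by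
  have hY : 3 ≤ t * K := by rwa [div_le_iff₀ hK] at htK
  have hcK : c * K * (log K - 1) = 5 * (t * K) - 2 - 5 * t := by
    rw [mul_right_comm, hc]; field_simp; ring
  have hlogY : 4 * (log K - 1) / 5 ≤ log (t * K) - 1 := by
    rw [log_mul ht0.ne' hK.ne']; linarith
  have hend : (5 * t + 1) * (t * K - 1) ^ 2 ≤ c * K * klFun (t * K) := by
    have : c * K * (t * K * (4 * (log K - 1) / 5)) ≤ c * K * klFun (t * K) := by
      rw [klFun_apply]
      have := mul_le_mul_of_nonneg_left hlogY (by positivity : 0 ≤ t * K)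
      have := mul_le_mul_of_nonneg_left this (by positivity : 0 ≤ c * K)
      nlinarith
    nlinarith
  have hkey := mul_sq_sub_one_le_mul_klFun (by linarith) (by linarith) hend
    (mul_nonneg hK.le hx0) (by nlinarith)
  have hid := klFun_mul hK.ne' x
  have : entropyQuadratic K t c x - (x ^ 2 - 1 / K ^ 2)
      = (c * K * klFun (K * x) - (5 * t + 1) * (K * x - 1) ^ 2) / K ^ 2 := by
    rw [entropyQuadratic, eq_div_iff (by positivity)]
    linear_combination (norm := (field_simp; ring)) -(c * K) * hid - K * (K * x - 1) * hc
  have := div_nonneg (sub_nonneg.2 hkey) (sq_nonneg K)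
  linarith

lemma entropyQuadratic_nonneg {K t c x : ℝ} (hK : 0 < K) (ht0 : 0 < t) (ht04 : t ≤ 0.4)
    (htK : 3 / K ≤ t) (hlogt : 1 - log K ≤ 5 * log t) (hL : 3 ≤ log K - 1)
    (hc : c * (log K - 1) = 5 * t - (2 + 5 * t) / K) (hc0 : 0 ≤ c) (htx : t ≤ x) (hx1 : x ≤ 1) :
    0 ≤ entropyQuadratic K t c x := by
  have hx0 : 0 < x := ht0.trans_le htx
  have hKt : 1 / K ≤ t / 3 := by rw [div_le_iff₀ hK] at htK ⊢; linarith
  have hcL : 0 ≤ c * (log K / K) := mul_nonneg hc0 (div_nonneg (by linarith) hK.le)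
  have hexpand : entropyQuadratic K t c x
      = 5 * t * (x - 1 / K) * (1 - x) + c * (x * log x) + c * (log K / K) := by
    rw [entropyQuadratic]; ring
  rw [hexpand]
  rcases le_or_gt x (1 / 2) with hx | hx
  · have hlogx : 1 - log K ≤ 5 * log x := by linarith [log_le_log ht0 htx]
    have hxlogx : c * (x * (1 - log K)) ≤ c * (x * (5 * log x)) :=
      mul_le_mul_of_nonneg_left (mul_le_mul_of_nonneg_left hlogx hx0.le) hc0
    have hcancel : c * (x * (1 - log K)) = - x * (5 * t - (2 + 5 * t) / K) := by
      linear_combination (-x) * hc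
    have hrest : 0 ≤ x * ((2 + 5 * t) / K) := by positivity
    have hq : x ≤ 5 * ((x - 1 / K) * (1 - x)) := by
      nlinarith [mul_le_mul (show 2 * x / 3 ≤ x - 1 / K by linarith)
        (show 1 / 2 ≤ 1 - x by linarith) (by norm_num) (by linarith)]
    nlinarith [mul_le_mul_of_nonneg_left hq ht0.le]
  · have hxlog : x - 1 ≤ x * log x := by
      have := mul_le_mul_of_nonneg_left (one_sub_inv_le_log_of_pos hx0) hx0.le
      rwa [mul_sub, mul_one, mul_inv_cancel₀ hx0.ne'] at this
    have h3c : 3 * c ≤ 5 * t := by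
      have : 0 ≤ (2 + 5 * t) / K := by positivity
      nlinarith [mul_le_mul_of_nonneg_left hL hc0]
    have hslope : c ≤ 5 * t * (x - 1 / K) := by
      nlinarith [mul_le_mul_of_nonneg_left (show 1 / 3 ≤ x - 1 / K by linarith) ht0.le]
    nlinarith [mul_le_mul_of_nonneg_left hxlog hc0, mul_nonneg (sub_nonneg.2 hx1)
      (sub_nonneg.2 hslope)]

theorem truncated_quadratic_bound_general (k : ℕ) (hk : 3 ≤ k) (t : ℝ)
    (ht0 : 0 < t) (ht04 : t ≤ 0.4)
    (ht2 : 3 / (k : ℝ) ≤ t)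
    (ht3 : (Real.exp 1 / (k : ℝ)) ^ ((1 : ℝ) / 5) ≤ t) :
    (0 < 5 * t / (Real.log k - 1) - (2 + 5 * t) / (k * (Real.log k - 1))) ∧
    ∀ x : ℝ, 0 ≤ x → x ≤ 1 →
      (x ^ 2 - 1 / (k : ℝ) ^ 2) * (if x < t then 1 else 0) ≤
        5 * t * (x - 1 / k) * (1 - x) +
          (5 * t / (Real.log k - 1) - (2 + 5 * t) / (k * (Real.log k - 1))) *
            (x * Real.log x + Real.log k / k) := by
  have hK : (0 : ℝ) < k := Nat.cast_pos.2 (by omega)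
  have hlogt : 1 - log k ≤ 5 * log t := by
    have := log_le_log (by positivity) ht3
    rw [log_rpow (by positivity), log_div (exp_ne_zero 1) hK.ne', log_exp] at this
    linarith
  have hL : 3 ≤ log k - 1 := by linarith [log_le_sub_one_of_pos ht0]
  set c := 5 * t / (log k - 1) - (2 + 5 * t) / (k * (log k - 1))
  have hc : c * (log k - 1) = 5 * t - (2 + 5 * t) / k := by simp only [c]; field_simp
  have hc0 : 0 < c := by
    have htK : 3 ≤ t * k := by rwa [div_le_iff₀ hK] at ht2
    refine pos_of_mul_pos_left ?_ (by linarith : (0 : ℝ) ≤ log k - 1)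
    rw [hc, sub_pos, div_lt_iff₀ hK]
    linarith
  refine ⟨hc0, fun x hx0 hx1 => ?_⟩
  split_ifs with hxt
  · rw [mul_one]
    exact sq_sub_inv_sq_le_entropyQuadratic hK ht0 ht04 ht2 hlogt hc hc0.le hx0 hxt.le
  · rw [mul_zero]
    exact entropyQuadratic_nonneg hK ht0 ht04 ht2 hlogt hL hc hc0.le (not_lt.1 hxt) hx1

/-- **Piecewise-quadratic entropy-type bound.**  For `k ≥ 3` and `t` in the indicated
range, with `c_t = 5t/(log k - 1) - (2 + 5t)/(k (log k - 1))`, one has `c_t > 0` and, for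
every `x ∈ [0,1]` (with the convention `0 log 0 = 0`, which holds since `Real.log 0 = 0`):
`(x² - 1/k²) 1{x < t} ≤ 5t (x - 1/k)(1 - x) + c_t (x log x + (log k)/k)`. -/
theorem truncated_quadratic_bound (k : ℕ) (hk : 3 ≤ k) (t : ℝ)
    (ht0 : 0 < t) (ht1 : t < 1) (ht04 : t ≤ 0.4)
    (ht2 : 3 / (k : ℝ) ≤ t)
    (ht3 : (Real.exp 1 / (k : ℝ)) ^ ((1 : ℝ) / 5) ≤ t)
    (ht4 : (1 - 1 / (k : ℝ)) / (2 * (Real.log k - 1)) ≤ t)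
    (ht5 : 2 * Real.log k / (5 * ((k : ℝ) - 2 * Real.log k + 1)) ≤ t) :
    (0 < 5 * t / (Real.log k - 1) - (2 + 5 * t) / (k * (Real.log k - 1))) ∧
    ∀ x : ℝ, 0 ≤ x → x ≤ 1 →
      (x ^ 2 - 1 / (k : ℝ) ^ 2) * (if x < t then 1 else 0) ≤
        5 * t * (x - 1 / k) * (1 - x) +
          (5 * t / (Real.log k - 1) - (2 + 5 * t) / (k * (Real.log k - 1))) *
            (x * Real.log x + Real.log k / k) :=
  truncated_quadratic_bound_general k hk t ht0 ht04 ht2 ht3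
end
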